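/- arXiv:1408.6506 — 4 statements merged into one kernel-verified Lean document; each statement's English description precedes it below -/
import Mathlib

section
/- For all sufficiently large x and uniformly for all integers h with 1 ≤ h ≤ 2·log log x, the sum of μ²(b)/b over positive integers b whose largest prime factor is at most x and which have exactly h distinct prime factors is bounded above and below by positive constants times (log log x)^h / h!. -/
set_option maxHeartbeats 1000000
open Finset

namespace Stmt0Aux


variable {P : Finset ℕ} {g : ℕ → ℝ}

/-- Generic double-counting bijection. -/
lemma pair_bij (P : Finset ℕ) (k : ℕ) (F : ℕ → Finset ℕ → ℝ) :
    ∑ B ∈ P.powersetCard (k+1), ∑ p ∈ B, F p (B.erase p)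
      = ∑ A ∈ P.powersetCard k, ∑ p ∈ P \ A, F p A := by
  classical
  rw [Finset.sum_sigma' (P.powersetCard (k+1)) (fun B => B) (fun B p => F p (B.erase p)),
      Finset.sum_sigma' (P.powersetCard k) (fun A => P \ A) (fun A p => F p A)]
  refine Finset.sum_bij' (fun x hx => ⟨x.1.erase x.2, x.2⟩) (fun y hy => ⟨insert y.2 y.1, y.2⟩)
    ?_ ?_ ?_ ?_ ?_
  · rintro ⟨B, p⟩ hx
    simp only [Finset.mem_sigma, Finset.mem_powersetCard] at hx ⊢
    obtain ⟨⟨hBP, hBc⟩, hpB⟩ := hx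
    refine ⟨⟨(Finset.erase_subset _ _).trans hBP, ?_⟩, ?_⟩
    · rw [Finset.card_erase_of_mem hpB, hBc]; rfl
    · exact Finset.mem_sdiff.mpr ⟨hBP hpB, Finset.notMem_erase _ _⟩
  · rintro ⟨A, p⟩ hy
    simp only [Finset.mem_sigma, Finset.mem_powersetCard, Finset.mem_sdiff] at hy ⊢
    obtain ⟨⟨hAP, hAc⟩, hpP, hpA⟩ := hy
    refine ⟨⟨Finset.insert_subset hpP hAP, ?_⟩, Finset.mem_insert_self _ _⟩
    rw [Finset.card_insert_of_notMem hpA, hAc]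
  · rintro ⟨B, p⟩ hx
    simp only [Finset.mem_sigma] at hx
    simp [Finset.insert_erase hx.2]
  · rintro ⟨A, p⟩ hy
    simp only [Finset.mem_sigma, Finset.mem_powersetCard, Finset.mem_sdiff] at hy
    simp [Finset.erase_insert hy.2.2]
  · rintro ⟨B, p⟩ hx; rfl

/-- elementary symmetric sum -/
noncomputable def esum (P : Finset ℕ) (g : ℕ → ℝ) (k : ℕ) : ℝ :=
  ∑ A ∈ P.powersetCard k, ∏ p ∈ A, g p

lemma esum_zero : esum P g 0 = 1 := by simp [esum]

lemma esum_nonneg (hg : ∀ p ∈ P, 0 ≤ g p) (k : ℕ) : 0 ≤ esum P g k := by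
  refine Finset.sum_nonneg fun A hA => Finset.prod_nonneg fun p hp => ?_
  exact hg p ((Finset.mem_powersetCard.mp hA).1 hp)

lemma key_identity (k : ℕ) :
    (k+1 : ℝ) * esum P g (k+1)
      = ∑ A ∈ P.powersetCard k, ∑ p ∈ P \ A, g p * ∏ q ∈ A, g q := by
  classical
  rw [← pair_bij P k (fun p A => g p * ∏ q ∈ A, g q)]
  rw [esum, Finset.mul_sum]
  refine Finset.sum_congr rfl fun B hB => ?_
  have hBc := (Finset.mem_powersetCard.mp hB).2
  have : ∀ p ∈ B, g p * ∏ q ∈ B.erase p, g q = ∏ q ∈ B, g q :=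
    fun p hp => Finset.mul_prod_erase _ _ hp
  rw [Finset.sum_congr rfl this, Finset.sum_const, hBc, nsmul_eq_mul]
  push_cast; ring

lemma key_identity2 (k : ℕ) :
    ∑ A ∈ P.powersetCard (k+1), ∑ p ∈ A, g p * ∏ q ∈ A, g q
      = ∑ A ∈ P.powersetCard k, ∑ p ∈ P \ A, g p ^ 2 * ∏ q ∈ A, g q := by
  classical
  rw [← pair_bij P k (fun p A => g p ^ 2 * ∏ q ∈ A, g q)]
  refine Finset.sum_congr rfl fun B hB => Finset.sum_congr rfl fun p hp => ?_
  rw [← Finset.mul_prod_erase _ _ hp]; ring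

/-- remainder term -/
noncomputable def rsum (P : Finset ℕ) (g : ℕ → ℝ) (k : ℕ) : ℝ :=
  ∑ A ∈ P.powersetCard k, ∑ p ∈ A, g p * ∏ q ∈ A, g q

lemma recursion (k : ℕ) :
    (∑ p ∈ P, g p) * esum P g k = (k+1 : ℝ) * esum P g (k+1) + rsum P g k := by
  classical
  rw [key_identity, rsum, esum, Finset.mul_sum, ← Finset.sum_add_distrib]
  refine Finset.sum_congr rfl fun A hA => ?_
  have hAP := (Finset.mem_powersetCard.mp hA).1
  have hsd : ∑ p ∈ P \ A, (g p * ∏ q ∈ A, g q) + ∑ p ∈ A, (g p * ∏ q ∈ A, g q)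
      = ∑ p ∈ P, (g p * ∏ q ∈ A, g q) := Finset.sum_sdiff hAP
  rw [hsd]
  exact Finset.sum_mul _ _ _

lemma rsum_zero : rsum P g 0 = 0 := by simp [rsum]

lemma rsum_nonneg (hg : ∀ p ∈ P, 0 ≤ g p) (k : ℕ) : 0 ≤ rsum P g k := by
  refine Finset.sum_nonneg fun A hA => Finset.sum_nonneg fun p hp => ?_
  have hAP := (Finset.mem_powersetCard.mp hA).1
  exact mul_nonneg (hg p (hAP hp)) (Finset.prod_nonneg fun q hq => hg q (hAP hq))

lemma rsum_le (hg : ∀ p ∈ P, 0 ≤ g p) (k : ℕ) :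
    rsum P g (k+1) ≤ (∑ p ∈ P, g p ^ 2) * esum P g k := by
  classical
  rw [rsum, key_identity2, esum, Finset.mul_sum]
  refine Finset.sum_le_sum fun A hA => ?_
  have hAP := (Finset.mem_powersetCard.mp hA).1
  have hprod : 0 ≤ ∏ q ∈ A, g q := Finset.prod_nonneg fun q hq => hg q (hAP hq)
  rw [← Finset.sum_mul]
  refine mul_le_mul_of_nonneg_right ?_ hprod
  refine Finset.sum_le_sum_of_subset_of_nonneg (Finset.sdiff_subset) fun p hp _ => sq_nonneg _

lemma esum_le (hg : ∀ p ∈ P, 0 ≤ g p) (k : ℕ) :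
    (k.factorial : ℝ) * esum P g k ≤ (∑ p ∈ P, g p) ^ k := by
  induction k with
  | zero => simp [esum_zero]
  | succ k ih =>
    have hS : 0 ≤ ∑ p ∈ P, g p := Finset.sum_nonneg hg
    have h1 : ((k+1).factorial : ℝ) * esum P g (k+1)
        = (k.factorial : ℝ) * ((k+1 : ℝ) * esum P g (k+1)) := by
      rw [Nat.factorial_succ]; push_cast; ring
    rw [h1]
    calc (k.factorial : ℝ) * ((k+1 : ℝ) * esum P g (k+1))
        ≤ (k.factorial : ℝ) * ((∑ p ∈ P, g p) * esum P g k) := by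
          refine mul_le_mul_of_nonneg_left ?_ (by positivity)
          rw [recursion]
          linarith [rsum_nonneg hg k]
      _ = (∑ p ∈ P, g p) * ((k.factorial : ℝ) * esum P g k) := by ring
      _ ≤ (∑ p ∈ P, g p) * (∑ p ∈ P, g p) ^ k := mul_le_mul_of_nonneg_left ih hS
      _ = (∑ p ∈ P, g p) ^ (k+1) := by ring

lemma esum_ge (hg : ∀ p ∈ P, 0 ≤ g p) (k : ℕ) :
    (∑ p ∈ P, g p) ^ (k+2) ≤ ((k+2).factorial : ℝ) * esum P g (k+2)
      + ((k+2) * (k+1) / 2 : ℝ) * (∑ p ∈ P, g p ^ 2) * (∑ p ∈ P, g p) ^ k := by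
  induction k with
  | zero =>
    -- S^2 ≤ 2 E_2 + Q
    have h0 := recursion (P := P) (g := g) 0
    have h1 := recursion (P := P) (g := g) 1
    norm_num at h0 h1
    have h2 : rsum P g 1 ≤ (∑ p ∈ P, g p ^ 2) * esum P g 0 := rsum_le hg 0
    rw [esum_zero] at h0 h2
    rw [rsum_zero] at h0
    have hE1 : esum P g 1 = ∑ p ∈ P, g p := by linarith
    have := h1
    rw [hE1] at this
    norm_num [Nat.factorial]
    nlinarith [this, h2]
  | succ k ih =>
    have hS : 0 ≤ ∑ p ∈ P, g p := Finset.sum_nonneg hg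
    have hQ : 0 ≤ ∑ p ∈ P, g p ^ 2 := Finset.sum_nonneg fun p _ => sq_nonneg _
    have hrec : (∑ p ∈ P, g p) * esum P g (k+2)
        = (k+3 : ℝ) * esum P g (k+3) + rsum P g (k+2) := by
      have := recursion (P := P) (g := g) (k+2); push_cast at this ⊢; linarith
    have hr : rsum P g (k+2) ≤ (∑ p ∈ P, g p ^ 2) * esum P g (k+1) := rsum_le hg (k+1)
    have hEub : ((k+1).factorial : ℝ) * esum P g (k+1) ≤ (∑ p ∈ P, g p) ^ (k+1) :=
      esum_le hg (k+1)
    -- multiply ih by S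
    have step1 : (∑ p ∈ P, g p) ^ (k+3)
        ≤ ((k+2).factorial : ℝ) * ((∑ p ∈ P, g p) * esum P g (k+2))
          + ((k+2) * (k+1) / 2 : ℝ) * (∑ p ∈ P, g p ^ 2) * (∑ p ∈ P, g p) ^ (k+1) := by
      have := mul_le_mul_of_nonneg_left ih hS
      calc (∑ p ∈ P, g p) ^ (k+3) = (∑ p ∈ P, g p) * (∑ p ∈ P, g p) ^ (k+2) := by ring
        _ ≤ (∑ p ∈ P, g p) * (((k+2).factorial : ℝ) * esum P g (k+2)
              + ((k+2) * (k+1) / 2 : ℝ) * (∑ p ∈ P, g p ^ 2) * (∑ p ∈ P, g p) ^ k) := this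
        _ = ((k+2).factorial : ℝ) * ((∑ p ∈ P, g p) * esum P g (k+2))
              + ((k+2) * (k+1) / 2 : ℝ) * (∑ p ∈ P, g p ^ 2)
                * ((∑ p ∈ P, g p) ^ k * (∑ p ∈ P, g p)) := by ring
        _ = _ := by rw [← pow_succ]
    rw [hrec] at step1
    -- bound factorial * rsum
    have hfr : ((k+2).factorial : ℝ) * rsum P g (k+2)
        ≤ ((k+2).factorial : ℝ) * ((∑ p ∈ P, g p ^ 2) * esum P g (k+1)) :=
      mul_le_mul_of_nonneg_left hr (by positivity)
    have hfr2 : ((k+2).factorial : ℝ) * ((∑ p ∈ P, g p ^ 2) * esum P g (k+1))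
        ≤ (k+2 : ℝ) * (∑ p ∈ P, g p ^ 2) * (∑ p ∈ P, g p) ^ (k+1) := by
      have h3 : ((k+2).factorial : ℝ) = (k+2 : ℝ) * ((k+1).factorial : ℝ) := by
        rw [Nat.factorial_succ]; push_cast; ring
      rw [h3]
      calc (k+2 : ℝ) * ((k+1).factorial : ℝ) * ((∑ p ∈ P, g p ^ 2) * esum P g (k+1))
          = (k+2 : ℝ) * (∑ p ∈ P, g p ^ 2) * (((k+1).factorial : ℝ) * esum P g (k+1)) := by
            ring
        _ ≤ (k+2 : ℝ) * (∑ p ∈ P, g p ^ 2) * (∑ p ∈ P, g p) ^ (k+1) := by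
            refine mul_le_mul_of_nonneg_left hEub (by positivity)
    have hfact : ((k+3).factorial : ℝ) = ((k+2).factorial : ℝ) * (k+3 : ℝ) := by
      show (((k+2)+1).factorial : ℝ) = _
      rw [Nat.factorial_succ]; push_cast; ring
    have goal2 : (∑ p ∈ P, g p) ^ (k+3)
        ≤ ((k+3).factorial : ℝ) * esum P g (k+3)
          + ((k+3) * (k+2) / 2 : ℝ) * (∑ p ∈ P, g p ^ 2) * (∑ p ∈ P, g p) ^ (k+1) := by
      rw [hfact]
      nlinarith [step1, hfr, hfr2]
    convert goal2 using 2 <;> push_cast <;> ring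





lemma squarefree_prod_of_primes {A : Finset ℕ} (hA : ∀ p ∈ A, p.Prime) :
    Squarefree (∏ p ∈ A, p) := by
  have hne : (∏ p ∈ A, p) ≠ 0 :=
    (Finset.prod_pos fun p hp => (hA p hp).pos).ne'
  rw [Nat.squarefree_iff_factorization_le_one hne]
  intro q
  rw [Nat.factorization_prod fun p hp => (hA p hp).ne_zero]
  classical
  have : ∀ p ∈ A, (Nat.factorization p) q = if p = q then 1 else 0 := by
    intro p hp
    rw [(hA p hp).factorization, Finsupp.single_apply]
  rw [Finsupp.finset_sum_apply, Finset.sum_congr rfl this, Finset.sum_ite_eq' A q (fun _ => 1)]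
  split <;> simp

noncomputable def theEquiv (x : ℝ) (hx : 0 ≤ x) (h : ℕ) :
    {A : Finset ℕ // A ∈ ((⌊x⌋₊+1).primesBelow).powersetCard h} ≃
    {b : ℕ // Squarefree b ∧ (∀ p : ℕ, p.Prime → p ∣ b → (p : ℝ) ≤ x) ∧
        b.primeFactors.card = h} where
  toFun A := ⟨∏ p ∈ A.1, p, by
    obtain ⟨A, hA⟩ := A
    rw [Finset.mem_powersetCard] at hA
    obtain ⟨hAP, hAc⟩ := hA
    have hpr : ∀ p ∈ A, p.Prime := fun p hp => Nat.prime_of_mem_primesBelow (hAP hp)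
    refine ⟨squarefree_prod_of_primes hpr, fun p pp hdvd => ?_, ?_⟩
    · obtain ⟨q, hq, hpq⟩ := (Prime.dvd_finset_prod_iff pp.prime _).mp hdvd
      have hq' : q < ⌊x⌋₊ + 1 := (Nat.mem_primesBelow.mp (hAP hq)).1
      have : p = q := ((Nat.prime_dvd_prime_iff_eq pp (hpr q hq)).mp hpq)
      subst this
      have hle : p ≤ ⌊x⌋₊ := Nat.lt_succ_iff.mp hq'
      calc (p : ℝ) ≤ (⌊x⌋₊ : ℝ) := by exact_mod_cast hle
        _ ≤ x := Nat.floor_le hx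
    · rw [Nat.primeFactors_prod hpr, hAc]⟩
  invFun b := ⟨b.1.primeFactors, by
    obtain ⟨b, hsq, hle, hcard⟩ := b
    rw [Finset.mem_powersetCard]
    refine ⟨fun p hp => ?_, hcard⟩
    have pp := Nat.prime_of_mem_primeFactors hp
    have hdvd := Nat.dvd_of_mem_primeFactors hp
    have := hle p pp hdvd
    rw [Nat.mem_primesBelow]
    exact ⟨Nat.lt_succ_of_le (Nat.le_floor this), pp⟩⟩
  left_inv A := by
    obtain ⟨A, hA⟩ := A
    rw [Finset.mem_powersetCard] at hA
    exact Subtype.ext (Nat.primeFactors_prod fun p hp => Nat.prime_of_mem_primesBelow (hA.1 hp))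
  right_inv b := Subtype.ext (Nat.prod_primeFactors_of_squarefree b.2.1)

lemma tsum_eq_esum (x : ℝ) (hx : 0 ≤ x) (h : ℕ) :
    (∑' b : {b : ℕ // Squarefree b ∧ (∀ p : ℕ, p.Prime → p ∣ b → (p : ℝ) ≤ x) ∧
        b.primeFactors.card = h}, (1 : ℝ) / (b.1 : ℝ))
      = esum ((⌊x⌋₊+1).primesBelow) (fun p => 1 / (p:ℝ)) h := by
  have key : ∀ A : {A : Finset ℕ // A ∈ ((⌊x⌋₊+1).primesBelow).powersetCard h},
      (1 : ℝ) / (((theEquiv x hx h) A).1 : ℝ) = ∏ p ∈ A.1, (1 / (p:ℝ)) := by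
    intro A
    show (1:ℝ) / ((∏ p ∈ A.1, p : ℕ) : ℝ) = _
    rw [Nat.cast_prod]
    rw [one_div, ← Finset.prod_inv_distrib]
    exact Finset.prod_congr rfl fun p _ => (one_div _).symm
  calc (∑' b : {b : ℕ // Squarefree b ∧ (∀ p : ℕ, p.Prime → p ∣ b → (p : ℝ) ≤ x) ∧
        b.primeFactors.card = h}, (1 : ℝ) / (b.1 : ℝ))
      = ∑' A : {A : Finset ℕ // A ∈ ((⌊x⌋₊+1).primesBelow).powersetCard h},
          (1 : ℝ) / (((theEquiv x hx h) A).1 : ℝ) := (Equiv.tsum_eq (theEquiv x hx h) _).symm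
    _ = ∑' A : {A : Finset ℕ // A ∈ ((⌊x⌋₊+1).primesBelow).powersetCard h},
          ∏ p ∈ A.1, (1 / (p:ℝ)) := tsum_congr key
    _ = ∑ A ∈ ((⌊x⌋₊+1).primesBelow).powersetCard h, ∏ p ∈ A, (1 / (p:ℝ)) :=
          Finset.tsum_subtype _ (fun A : Finset ℕ => ∏ p ∈ A, (1 / (p:ℝ)))
    _ = _ := rfl


lemma theta_le (N : ℕ) : ∑ p ∈ (N+1).primesBelow, Real.log p ≤ N * Real.log 4 := by
  have h1 : ∑ p ∈ (N+1).primesBelow, Real.log p = Real.log ((primorial N : ℕ) : ℝ) := by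
    rw [primorial, Nat.primesBelow]
    push_cast
    rw [Real.log_prod]
    intro p hp
    have := (Finset.mem_filter.mp hp).2
    exact_mod_cast this.pos.ne'
  rw [h1]
  calc Real.log ((primorial N : ℕ) : ℝ) ≤ Real.log ((4:ℝ) ^ N) := by
        apply Real.log_le_log (by exact_mod_cast primorial_pos N)
        exact_mod_cast primorial_le_4_pow N
    _ = N * Real.log 4 := by rw [Real.log_pow]

lemma legendre_lower {p N : ℕ} (hp : p.Prime) : N / p ≤ (N.factorial).factorization p := by
  rcases Nat.eq_zero_or_pos (N / p) with h | h
  · simp [h]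
  · have hpN : p ≤ N := by
      by_contra hc
      push_neg at hc
      rw [Nat.div_eq_of_lt hc] at h; omega
    have hlog : 0 < Nat.log p N := Nat.log_pos hp.one_lt hpN
    rw [← Nat.Prime.pow_dvd_iff_le_factorization hp (Nat.factorial_ne_zero N)]
    rw [Nat.Prime.pow_dvd_factorial_iff hp (Nat.lt_succ_self _)]
    calc N / p = N / p ^ 1 := by rw [pow_one]
      _ ≤ ∑ i ∈ Ico 1 (Nat.log p N + 1), N / p ^ i := by
        apply Finset.single_le_sum (f := fun i => N / p ^ i)
        · intro i _; positivity
        · rw [Finset.mem_Ico]; omega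

lemma log_factorial_le (N : ℕ) : Real.log (N.factorial : ℝ) ≤ N * Real.log N := by
  calc Real.log (N.factorial : ℝ) ≤ Real.log ((N:ℝ) ^ N) := by
        rcases Nat.eq_zero_or_pos N with rfl | hN
        · simp
        apply Real.log_le_log (by exact_mod_cast N.factorial_pos)
        exact_mod_cast Nat.factorial_le_pow N
    _ = N * Real.log N := by rw [Real.log_pow]

lemma sum_nu_log_le (N : ℕ) :
    ∑ p ∈ (N+1).primesBelow, (((N.factorial).factorization p : ℕ) : ℝ) * Real.log p
      ≤ N * Real.log N := by
  have hfac : (N.factorial : ℕ) ≠ 0 := Nat.factorial_ne_zero N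
  have hsub : (N+1).primesBelow ⊆ (N.factorial).primeFactors := by
    intro p hp
    rw [Nat.mem_primesBelow] at hp
    refine Nat.mem_primeFactors.mpr ⟨hp.2, Nat.dvd_factorial hp.2.pos (by omega), hfac⟩
  have hlogfac : Real.log (N.factorial : ℝ) =
      ∑ p ∈ (N.factorial).primeFactors, (((N.factorial).factorization p : ℕ) : ℝ) * Real.log p := by
    conv_lhs => rw [← Nat.factorization_prod_pow_eq_self hfac]
    rw [Finsupp.prod, ← Nat.support_factorization]
    push_cast
    rw [Real.log_prod]
    · refine Finset.sum_congr rfl fun p hp => ?_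
      rw [Real.log_pow]
    · intro p hp
      have hp' : p.Prime := Nat.prime_of_mem_primeFactors (by rwa [Nat.support_factorization] at hp)
      exact pow_ne_zero _ (by exact_mod_cast hp'.pos.ne')
  calc ∑ p ∈ (N+1).primesBelow, (((N.factorial).factorization p : ℕ) : ℝ) * Real.log p
      ≤ ∑ p ∈ (N.factorial).primeFactors, (((N.factorial).factorization p : ℕ) : ℝ) * Real.log p := by
        apply Finset.sum_le_sum_of_subset_of_nonneg hsub
        intro p hp _
        have hp' : p.Prime := Nat.prime_of_mem_primeFactors hp
        have : (0:ℝ) ≤ Real.log p := Real.log_nonneg (by exact_mod_cast hp'.one_lt.le)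
        positivity
    _ = Real.log (N.factorial : ℝ) := hlogfac.symm
    _ ≤ N * Real.log N := log_factorial_le N

/-- Mertens' first theorem, upper-bound version. -/
lemma mertens_first {N : ℕ} (hN : 1 ≤ N) :
    ∑ p ∈ (N+1).primesBelow, Real.log p / p ≤ Real.log N + 2 := by
  have hNR : (0:ℝ) < N := by exact_mod_cast hN
  have key : ∑ p ∈ (N+1).primesBelow, ((N:ℝ) / p - 1) * Real.log p ≤ N * Real.log N := by
    calc ∑ p ∈ (N+1).primesBelow, ((N:ℝ) / p - 1) * Real.log p
        ≤ ∑ p ∈ (N+1).primesBelow, (((N / p : ℕ) : ℕ) : ℝ) * Real.log p := by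
          apply Finset.sum_le_sum
          intro p hp
          have hp' := Nat.prime_of_mem_primesBelow hp
          have hppos : (0:ℝ) < p := by exact_mod_cast hp'.pos
          have hlog : (0:ℝ) ≤ Real.log p := Real.log_nonneg (by exact_mod_cast hp'.one_lt.le)
          apply mul_le_mul_of_nonneg_right _ hlog
          have hmod := Nat.div_add_mod N p
          have hmodlt : N % p < p := Nat.mod_lt N hp'.pos
          have : (N:ℝ) = p * ((N / p : ℕ) : ℝ) + ((N % p : ℕ) : ℝ) := by exact_mod_cast hmod.symm
          rw [div_sub_one hppos.ne', div_le_iff₀ hppos]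
          have hmodlt' : ((N % p : ℕ) : ℝ) < (p : ℝ) := by exact_mod_cast hmodlt
          push_cast at this ⊢
          nlinarith [hmodlt', this]
      _ ≤ ∑ p ∈ (N+1).primesBelow, (((N.factorial).factorization p : ℕ) : ℝ) * Real.log p := by
          apply Finset.sum_le_sum
          intro p hp
          have hp' := Nat.prime_of_mem_primesBelow hp
          have hlog : (0:ℝ) ≤ Real.log p := Real.log_nonneg (by exact_mod_cast hp'.one_lt.le)
          apply mul_le_mul_of_nonneg_right _ hlog
          exact_mod_cast legendre_lower hp'
      _ ≤ N * Real.log N := sum_nu_log_le N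
  have expand : ∑ p ∈ (N+1).primesBelow, ((N:ℝ) / p - 1) * Real.log p
      = N * (∑ p ∈ (N+1).primesBelow, Real.log p / p) - ∑ p ∈ (N+1).primesBelow, Real.log p := by
    rw [Finset.mul_sum, ← Finset.sum_sub_distrib]
    refine Finset.sum_congr rfl fun p hp => ?_
    have hp' := Nat.prime_of_mem_primesBelow hp
    have hppos : (0:ℝ) < p := by exact_mod_cast hp'.pos
    field_simp
  have htheta := theta_le N
  have hlog4 : Real.log 4 ≤ 2 := by
    rw [show (4:ℝ) = 2^2 by norm_num, Real.log_pow]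
    push_cast
    nlinarith [Real.log_two_lt_d9]
  have : N * (∑ p ∈ (N+1).primesBelow, Real.log p / p) ≤ N * Real.log N + N * 2 := by
    have := key
    rw [expand] at this
    nlinarith [htheta, hlog4, hNR]
  nlinarith [this, hNR]


lemma telescope (f : ℕ → ℝ) : ∀ {m n : ℕ}, m ≤ n →
    ∑ i ∈ Finset.Ico m n, (f i - f (i+1)) = f m - f n := by
  intro m n h
  induction n, h using Nat.le_induction with
  | base => simp
  | succ n hmn ih => rw [Finset.sum_Ico_succ_top hmn]; rw [ih]; ring

lemma loglog_step {n : ℕ} (hn : 3 ≤ n) :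
    1 - Real.log n / Real.log (n+1)
      ≤ Real.log (Real.log (n+1)) - Real.log (Real.log n) := by
  have ha : (1:ℝ) ≤ Real.log n := by
    rw [show (1:ℝ) = Real.log (Real.exp 1) by rw [Real.log_exp]]
    apply Real.log_le_log (Real.exp_pos 1)
    have h3 : (3:ℝ) ≤ n := by exact_mod_cast hn
    nlinarith [Real.exp_one_lt_d9]
  have hb : Real.log n ≤ Real.log (n+1) := by
    apply Real.log_le_log (by positivity)
    push_cast; linarith
  have ha0 : (0:ℝ) < Real.log n := by linarith
  have hb0 : (0:ℝ) < Real.log (n+1) := by linarith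
  have hdiv : Real.log (Real.log n / Real.log (n+1)) ≤ Real.log n / Real.log (n+1) - 1 :=
    Real.log_le_sub_one_of_pos (by positivity)
  rw [Real.log_div ha0.ne' hb0.ne'] at hdiv
  linarith

/-- Mertens' second theorem, upper bound. -/
lemma mertens_second_upper {N : ℕ} (hN : 3 ≤ N) :
    ∑ p ∈ (N+1).primesBelow, 1/(p:ℝ) ≤ Real.log (Real.log N) + 6 := by
  classical
  have hlogN : (1:ℝ) ≤ Real.log N := by
    rw [show (1:ℝ) = Real.log (Real.exp 1) by rw [Real.log_exp]]
    apply Real.log_le_log (Real.exp_pos 1)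
    have h3 : (3:ℝ) ≤ N := by exact_mod_cast hN
    nlinarith [Real.exp_one_lt_d9]
  set Pr := (N+1).primesBelow with hPr
  have h2Pr : 2 ∈ Pr := Nat.mem_primesBelow.mpr ⟨by omega, Nat.prime_two⟩
  set Pr' := Pr.erase 2 with hPr'
  -- members of Pr' are odd primes in [3, N]
  have hmem : ∀ p ∈ Pr', p.Prime ∧ 3 ≤ p ∧ p ≤ N := by
    intro p hp
    have h1 := Finset.mem_erase.mp hp
    have h2 := Nat.mem_primesBelow.mp h1.2
    have := h2.2.two_le
    refine ⟨h2.2, ?_, by omega⟩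
    rcases Nat.lt_or_ge p 3 with h | h
    · interval_cases p
      · exact absurd rfl h1.1
    · exact h
  have hsplit : ∑ p ∈ Pr, 1/(p:ℝ) = 1/2 + ∑ p ∈ Pr', 1/(p:ℝ) := by
    rw [hPr', ← Finset.add_sum_erase _ _ h2Pr]
    norm_num
  set c : ℕ → ℝ := fun n => (Real.log n)⁻¹ with hc
  -- c is nonneg-decreasing on [3, ∞)
  have hlog3 : (1:ℝ) ≤ Real.log 3 := by
    rw [show (1:ℝ) = Real.log (Real.exp 1) by rw [Real.log_exp]]
    apply Real.log_le_log (Real.exp_pos 1)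
    nlinarith [Real.exp_one_lt_d9]
  have hlogmono : ∀ {m n : ℕ}, 3 ≤ m → m ≤ n → (1:ℝ) ≤ Real.log m ∧ Real.log m ≤ Real.log n := by
    intro m n h3 hmn
    constructor
    · calc (1:ℝ) ≤ Real.log 3 := hlog3
        _ ≤ Real.log m := Real.log_le_log (by norm_num) (by exact_mod_cast h3)
    · exact Real.log_le_log (by positivity) (by exact_mod_cast hmn)
  have hdnonneg : ∀ n, 3 ≤ n → 0 ≤ c n - c (n+1) := by
    intro n h3
    obtain ⟨h1, h2⟩ := hlogmono h3 (Nat.le_succ n)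
    have : Real.log (n+1) = Real.log ((n+1 : ℕ)) := by push_cast; ring_nf
    apply sub_nonneg.mpr
    apply inv_anti₀ (by linarith)
    push_cast
    exact Real.log_le_log (by positivity) (by push_cast; linarith)
  -- step 1: rewrite 1/p using telescoping
  have hstep1 : ∑ p ∈ Pr', 1/(p:ℝ)
      = (∑ p ∈ Pr', Real.log p / p) * c N
        + ∑ p ∈ Pr', (Real.log p / p) * (∑ n ∈ Finset.Ico p N, (c n - c (n+1))) := by
    rw [Finset.sum_mul, ← Finset.sum_add_distrib]
    refine Finset.sum_congr rfl fun p hp => ?_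
    obtain ⟨hpp, h3p, hpN⟩ := hmem p hp
    rw [telescope c hpN]
    have hlp : (0:ℝ) < Real.log p := by
      obtain ⟨h1, _⟩ := hlogmono h3p le_rfl; linarith
    have hppos : (0:ℝ) < p := by exact_mod_cast hpp.pos
    have : c p = (Real.log p)⁻¹ := rfl
    field_simp [hc]
    rw [this]; field_simp [hlp.ne']; ring
  -- step 2: swap the double sum
  have hswap : ∑ p ∈ Pr', (Real.log p / p) * (∑ n ∈ Finset.Ico p N, (c n - c (n+1)))
      = ∑ n ∈ Finset.Ico 3 N, (∑ p ∈ Pr' with p ≤ n, Real.log p / p) * (c n - c (n+1)) := by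
    have h1 : ∀ p ∈ Pr', (Real.log p / p) * (∑ n ∈ Finset.Ico p N, (c n - c (n+1)))
        = ∑ n ∈ Finset.Ico 3 N, (if p ≤ n then Real.log p / p * (c n - c (n+1)) else 0) := by
      intro p hp
      obtain ⟨hpp, h3p, hpN⟩ := hmem p hp
      have hfil : (Finset.Ico 3 N).filter (fun n => p ≤ n) = Finset.Ico p N := by
        ext n
        simp only [Finset.mem_filter, Finset.mem_Ico]
        omega
      rw [← Finset.sum_filter, hfil, Finset.mul_sum]
    rw [Finset.sum_congr rfl h1, Finset.sum_comm]
    refine Finset.sum_congr rfl fun n hn => ?_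
    rw [← Finset.sum_filter, Finset.sum_mul]
  -- bound the inner sums
  have hW : ∀ n ∈ Finset.Ico 3 N, (∑ p ∈ Pr' with p ≤ n, Real.log p / p) ≤ Real.log n + 2 := by
    intro n hn
    rw [Finset.mem_Ico] at hn
    have hsub : (Pr'.filter (fun p => p ≤ n)) ⊆ (n+1).primesBelow := by
      intro p hp
      obtain ⟨hp1, hp2⟩ := Finset.mem_filter.mp hp
      exact Nat.mem_primesBelow.mpr ⟨by omega, (hmem p hp1).1⟩
    calc (∑ p ∈ Pr' with p ≤ n, Real.log p / p)
        ≤ ∑ p ∈ (n+1).primesBelow, Real.log p / p := by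
          apply Finset.sum_le_sum_of_subset_of_nonneg hsub
          intro p hp _
          have hpp := Nat.prime_of_mem_primesBelow hp
          have h1 : (0:ℝ) ≤ Real.log p := Real.log_nonneg (by exact_mod_cast hpp.one_lt.le)
          have h2 : (0:ℝ) < p := by exact_mod_cast hpp.pos
          positivity
      _ ≤ Real.log n + 2 := mertens_first (by omega)
  have hwnonneg : ∀ p ∈ Pr, (0:ℝ) ≤ Real.log p / p := by
    intro p hp
    have hpp := Nat.prime_of_mem_primesBelow hp
    have h1 : (0:ℝ) ≤ Real.log p := Real.log_nonneg (by exact_mod_cast hpp.one_lt.le)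
    have h2 : (0:ℝ) < p := by exact_mod_cast hpp.pos
    positivity
  -- first piece
  have hpiece1 : (∑ p ∈ Pr', Real.log p / p) * c N ≤ 3 := by
    have hA : ∑ p ∈ Pr', Real.log p / p ≤ Real.log N + 2 := by
      calc ∑ p ∈ Pr', Real.log p / p ≤ ∑ p ∈ Pr, Real.log p / p :=
            Finset.sum_le_sum_of_subset_of_nonneg (Finset.erase_subset _ _)
              (fun p hp _ => hwnonneg p hp)
        _ ≤ Real.log N + 2 := mertens_first (by omega)
    have hcN : 0 < Real.log N := by linarith
    have h0 : 0 ≤ ∑ p ∈ Pr', Real.log p / p :=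
      Finset.sum_nonneg fun p hp => hwnonneg p (Finset.mem_of_mem_erase hp)
    have : (∑ p ∈ Pr', Real.log p / p) * c N ≤ (Real.log N + 2) * (Real.log N)⁻¹ :=
      mul_le_mul hA le_rfl (by positivity) (by linarith)
    calc (∑ p ∈ Pr', Real.log p / p) * c N ≤ (Real.log N + 2) * (Real.log N)⁻¹ := this
      _ = 1 + 2 * (Real.log N)⁻¹ := by field_simp
      _ ≤ 1 + 2 * 1 := by
          have : (Real.log N)⁻¹ ≤ 1 := by
            rw [inv_le_one_iff₀]; right; linarith
          linarith
      _ = 3 := by norm_num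
  -- second piece
  have hpiece2 : ∑ n ∈ Finset.Ico 3 N, (∑ p ∈ Pr' with p ≤ n, Real.log p / p) * (c n - c (n+1))
      ≤ Real.log (Real.log N) + 2 := by
    have hterm : ∀ n ∈ Finset.Ico 3 N,
        (∑ p ∈ Pr' with p ≤ n, Real.log p / p) * (c n - c (n+1))
          ≤ (Real.log (Real.log (n+1)) - Real.log (Real.log n)) + 2 * (c n - c (n+1)) := by
      intro n hn
      have hn' := (Finset.mem_Ico.mp hn).1
      have hd := hdnonneg n hn'
      have h1 : (∑ p ∈ Pr' with p ≤ n, Real.log p / p) * (c n - c (n+1))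
          ≤ (Real.log n + 2) * (c n - c (n+1)) :=
        mul_le_mul_of_nonneg_right (hW n hn) hd
      have ⟨ha1, _⟩ := hlogmono hn' le_rfl
      have ⟨_, hab⟩ := hlogmono hn' (Nat.le_succ n)
      have ha0 : (0:ℝ) < Real.log n := by linarith
      have hb0 : (0:ℝ) < Real.log ((n+1 : ℕ)) := by linarith
      have heq : Real.log n * (c n - c (n+1)) = 1 - Real.log n / Real.log ((n+1:ℕ)) := by
        simp only [hc]
        field_simp
      have hkey : 1 - Real.log n / Real.log ((n+1:ℕ))
          ≤ Real.log (Real.log ((n+1:ℕ))) - Real.log (Real.log n) := by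
        have := loglog_step hn'
        push_cast at this ⊢
        convert this using 3
      calc (∑ p ∈ Pr' with p ≤ n, Real.log p / p) * (c n - c (n+1))
          ≤ (Real.log n + 2) * (c n - c (n+1)) := h1
        _ = Real.log n * (c n - c (n+1)) + 2 * (c n - c (n+1)) := by ring
        _ ≤ (Real.log (Real.log ((n+1:ℕ))) - Real.log (Real.log n)) + 2 * (c n - c (n+1)) := by
            rw [heq]
            push_cast
            push_cast at hkey
            linarith
        _ = (Real.log (Real.log (n+1)) - Real.log (Real.log n)) + 2 * (c n - c (n+1)) := by
            push_cast
            ring_nf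
    calc ∑ n ∈ Finset.Ico 3 N, (∑ p ∈ Pr' with p ≤ n, Real.log p / p) * (c n - c (n+1))
        ≤ ∑ n ∈ Finset.Ico 3 N,
            ((Real.log (Real.log (n+1)) - Real.log (Real.log n)) + 2 * (c n - c (n+1))) :=
          Finset.sum_le_sum hterm
      _ = (Real.log (Real.log N) - Real.log (Real.log 3)) + 2 * (c 3 - c N) := by
          rw [Finset.sum_add_distrib, ← Finset.mul_sum, telescope c hN]
          have htel : ∑ n ∈ Finset.Ico 3 N,
              (Real.log (Real.log (n+1)) - Real.log (Real.log n))
              = Real.log (Real.log N) - Real.log (Real.log 3) := by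
            have t := telescope (fun n : ℕ => Real.log (Real.log n)) hN
            have h2 : ∑ n ∈ Finset.Ico 3 N, (Real.log (Real.log (n+1)) - Real.log (Real.log n))
                = -∑ i ∈ Finset.Ico 3 N, ((fun n : ℕ => Real.log (Real.log n)) i
                    - (fun n : ℕ => Real.log (Real.log n)) (i+1)) := by
              rw [← Finset.sum_neg_distrib]
              refine Finset.sum_congr rfl fun n _ => ?_
              simp only []
              push_cast
              ring
            rw [h2, t]
            push_cast
            ring
          rw [htel]
      _ ≤ Real.log (Real.log N) + 2 := by
          have h3 : (0:ℝ) ≤ Real.log (Real.log 3) := Real.log_nonneg hlog3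
          have hc3 : c 3 ≤ 1 := by
            simp only [hc]
            rw [inv_le_one_iff₀]
            right
            push_cast
            exact hlog3
          have hcN : 0 ≤ c N := by
            simp only [hc]
            have : (0:ℝ) ≤ Real.log N := by linarith
            positivity
          linarith
  rw [hsplit, hstep1, hswap]
  linarith

/-- −log(1−y) ≤ y + y² for 0 ≤ y ≤ 1/2 -/
lemma neg_log_one_sub_le {y : ℝ} (h0 : 0 ≤ y) (h2 : y ≤ 1/2) :
    Real.log (1 - y)⁻¹ ≤ y + y^2 := by
  have h1y : (0:ℝ) < 1 - y := by linarith
  set t : ℝ := y + y^2 with ht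
  have ht0 : 0 ≤ t := by positivity
  -- exp t ≥ 1 + t + t²/2 ≥ 1/(1-y)
  have hexp : 1 + t + t^2/2 ≤ Real.exp t := by
    have := Real.sum_le_exp_of_nonneg ht0 3
    rw [Finset.sum_range_succ, Finset.sum_range_succ, Finset.sum_range_succ] at this
    norm_num at this
    linarith
  have hkey : (1 - y)⁻¹ ≤ Real.exp t := by
    rw [inv_le_iff_one_le_mul₀ h1y]
    calc (1:ℝ) ≤ (1 + t + t^2/2) * (1 - y) := by nlinarith
      _ ≤ Real.exp t * (1 - y) := by nlinarith
  calc Real.log (1 - y)⁻¹ ≤ Real.log (Real.exp t) :=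
        Real.log_le_log (by positivity) hkey
    _ = t := Real.log_exp t

/-- Sum of 1/p² over primes is at most 35/72. -/
lemma sum_prime_sq_inv_le (M : ℕ) : ∑ p ∈ M.primesBelow, (1/(p:ℝ))^2 ≤ 35/72 := by
  classical
  set f : ℕ → ℝ := fun p => (1/(p:ℝ))^2 with hf
  have hf0 : ∀ p, 0 ≤ f p := fun p => by positivity
  set Pr := M.primesBelow with hPr
  rcases le_or_gt M 2 with hM | hM
  · have : Pr = ∅ := by
      rw [hPr, Finset.eq_empty_iff_forall_notMem]
      intro p hp
      have := Nat.mem_primesBelow.mp hp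
      have := this.2.two_le
      omega
    rw [this]
    norm_num
  rw [← Finset.sum_filter_add_sum_filter_not Pr (fun p => p < 5) f]
  have hpart1 : ∑ p ∈ Pr with p < 5, f p ≤ 13/36 := by
    have hsub : (Pr.filter (fun p => p < 5)) ⊆ ({2, 3} : Finset ℕ) := by
      intro p hp
      obtain ⟨hp1, hp2⟩ := Finset.mem_filter.mp hp
      have hpp := Nat.prime_of_mem_primesBelow hp1
      have h2 := hpp.two_le
      interval_cases p
      · simp
      · simp
      · exact absurd (by norm_num : ¬ Nat.Prime 4) (by simpa using hpp)
    calc ∑ p ∈ Pr with p < 5, f p ≤ ∑ p ∈ ({2, 3} : Finset ℕ), f p :=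
          Finset.sum_le_sum_of_subset_of_nonneg hsub (fun p _ _ => hf0 p)
      _ = f 2 + f 3 := by norm_num
      _ = 13/36 := by simp only [hf]; norm_num
  have hpart2 : ∑ p ∈ Pr with ¬ p < 5, f p ≤ 1/8 := by
    set g : ℕ → ℝ := fun k => ((2*k : ℝ))⁻¹/2 with hg
    set s := Pr.filter (fun p => ¬ p < 5) with hs
    have hodd : ∀ p ∈ s, p % 2 = 1 ∧ 5 ≤ p ∧ p < M := by
      intro p hp
      obtain ⟨hp1, hp2⟩ := Finset.mem_filter.mp hp
      have hpp := Nat.prime_of_mem_primesBelow hp1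
      have hlt := (Nat.mem_primesBelow.mp hp1).1
      push_neg at hp2
      have hodd : Odd p := hpp.odd_of_ne_two (by omega)
      obtain ⟨j, hj⟩ := hodd
      exact ⟨by omega, hp2, hlt⟩
    have hterm : ∀ p ∈ s, f p ≤ g (p/2) - g (p/2 + 1) := by
      intro p hp
      obtain ⟨hmod, h5, _⟩ := hodd p hp
      set k := p / 2 with hk
      have hpk : p = 2*k + 1 := by omega
      have hk2 : 2 ≤ k := by omega
      have hkr : (2:ℝ) ≤ (k:ℝ) := by exact_mod_cast hk2
      have hkpos : (0:ℝ) < (k:ℝ) := by linarith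
      simp only [hf, hg]
      rw [hpk]
      push_cast
      rw [div_pow, one_pow]
      rw [div_le_iff₀ (by positivity)]
      have e1 : ((2*(k:ℝ)+1))^2 = 4*(k:ℝ)^2 + 4*k + 1 := by ring
      field_simp
      nlinarith
    have himg : ∑ p ∈ s, (g (p/2) - g (p/2 + 1)) = ∑ k ∈ s.image (· / 2), (g k - g (k+1)) := by
      rw [Finset.sum_image]
      intro p hp q hq hpq
      have h1 := (hodd p hp).1
      have h2 := (hodd q hq).1
      beta_reduce at hpq
      omega
    have hsub2 : s.image (· / 2) ⊆ Finset.Ico 2 M := by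
      intro k hk
      obtain ⟨p, hp, rfl⟩ := Finset.mem_image.mp hk
      obtain ⟨_, h5, hlt⟩ := hodd p hp
      rw [Finset.mem_Ico]
      omega
    have hgnonneg : ∀ k ∈ Finset.Ico 2 M, 0 ≤ g k - g (k+1) := by
      intro k hk
      have h2 := (Finset.mem_Ico.mp hk).1
      have hkr : (2:ℝ) ≤ (k:ℝ) := by exact_mod_cast h2
      simp only [hg]
      have h1 : (0:ℝ) < 2*(k:ℝ) := by linarith
      have h2' : 2*(k:ℝ) ≤ 2*((k:ℝ)+1) := by linarith
      have := inv_anti₀ h1 h2'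
      push_cast
      linarith
    calc ∑ p ∈ s, f p ≤ ∑ p ∈ s, (g (p/2) - g (p/2 + 1)) := Finset.sum_le_sum hterm
      _ = ∑ k ∈ s.image (· / 2), (g k - g (k+1)) := himg
      _ ≤ ∑ k ∈ Finset.Ico 2 M, (g k - g (k+1)) :=
          Finset.sum_le_sum_of_subset_of_nonneg hsub2 (fun k hk _ => hgnonneg k hk)
      _ = g 2 - g M := telescope g (by omega)
      _ ≤ 1/8 := by
          simp only [hg]
          have hMr : (0:ℝ) < (M:ℝ) := by exact_mod_cast (by omega : 0 < M)
          have h0 : (0:ℝ) ≤ (2*(M:ℝ))⁻¹/2 := by positivity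
          push_cast
          norm_num
          positivity
  linarith

noncomputable def invHom : ℕ →* ℝ where
  toFun := fun n => (n:ℝ)⁻¹
  map_one' := by norm_num
  map_mul' := fun m n => by push_cast; exact mul_inv _ _

/-- Mertens' second theorem, lower bound. -/
lemma mertens_second_lower {N : ℕ} (hN : 3 ≤ N) :
    Real.log (Real.log N) - 1 ≤ ∑ p ∈ (N+1).primesBelow, 1/(p:ℝ) := by
  classical
  have hnorm : ∀ {p : ℕ}, p.Prime → ‖invHom p‖ < 1 := by
    intro p hp
    have h2 : (2:ℝ) ≤ p := by exact_mod_cast hp.two_le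
    show ‖(p:ℝ)⁻¹‖ < 1
    rw [Real.norm_eq_abs, abs_of_nonneg (by positivity), inv_lt_one_iff₀]
    right; linarith
  obtain ⟨hsum, hhs⟩ :=
    EulerProduct.summable_and_hasSum_smoothNumbers_prod_primesBelow_geometric hnorm (N+1)
  have htsum : ∑' m : ((N+1).smoothNumbers), ((m : ℕ) : ℝ)⁻¹
      = ∏ p ∈ (N+1).primesBelow, (1 - (p:ℝ)⁻¹)⁻¹ := hhs.tsum_eq
  have hsummable : Summable (fun m : ((N+1).smoothNumbers) => ((m : ℕ) : ℝ)⁻¹) := hhs.summable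
  have hind : Summable (Set.indicator ((N+1).smoothNumbers) (fun n : ℕ => (n:ℝ)⁻¹)) :=
    summable_subtype_iff_indicator.mp hsummable
  have hle1 : ∑ n ∈ Finset.Icc 1 N, Set.indicator ((N+1).smoothNumbers)
        (fun n : ℕ => (n:ℝ)⁻¹) n ≤ ∏ p ∈ (N+1).primesBelow, (1 - (p:ℝ)⁻¹)⁻¹ := by
    have hnn : ∀ n ∉ Finset.Icc 1 N,
        0 ≤ Set.indicator ((N+1).smoothNumbers) (fun n : ℕ => (n:ℝ)⁻¹) n := by
      intro n _
      apply Set.indicator_nonneg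
      intro m _
      positivity
    calc ∑ n ∈ Finset.Icc 1 N, Set.indicator ((N+1).smoothNumbers) (fun n : ℕ => (n:ℝ)⁻¹) n
        ≤ ∑' n : ℕ, Set.indicator ((N+1).smoothNumbers) (fun n : ℕ => (n:ℝ)⁻¹) n :=
          Summable.sum_le_tsum _ hnn hind
      _ = ∑' m : ((N+1).smoothNumbers), ((m : ℕ) : ℝ)⁻¹ :=
          (_root_.tsum_subtype ((N+1).smoothNumbers) (fun n : ℕ => (n:ℝ)⁻¹)).symm
      _ = ∏ p ∈ (N+1).primesBelow, (1 - (p:ℝ)⁻¹)⁻¹ := htsum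
  have heq1 : ∑ n ∈ Finset.Icc 1 N, Set.indicator ((N+1).smoothNumbers)
        (fun n : ℕ => (n:ℝ)⁻¹) n = ∑ n ∈ Finset.Icc 1 N, (n:ℝ)⁻¹ := by
    refine Finset.sum_congr rfl fun n hn => ?_
    rw [Finset.mem_Icc] at hn
    apply Set.indicator_of_mem
    rw [Nat.mem_smoothNumbers]
    refine ⟨by omega, fun p hp => ?_⟩
    have := Nat.le_of_mem_primeFactorsList hp
    omega
  have hharm : Real.log N ≤ ∑ n ∈ Finset.Icc 1 N, (n:ℝ)⁻¹ := by
    have h1 := log_add_one_le_harmonic N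
    have h2 : ((harmonic N : ℚ) : ℝ) = ∑ n ∈ Finset.Icc 1 N, (n:ℝ)⁻¹ := by
      rw [harmonic]
      push_cast
      rw [show Finset.Icc 1 N = Finset.Ico 1 (N+1) from by rw [Finset.Ico_add_one_right_eq_Icc]]
      rw [Finset.sum_Ico_eq_sum_range]
      simp [add_comm]
    have h3 : Real.log N ≤ Real.log (N+1) := by
      apply Real.log_le_log (by positivity)
      push_cast
      linarith
    calc Real.log N ≤ Real.log (N+1) := h3
      _ = Real.log ((N:ℝ)+1) := rfl
      _ ≤ ((harmonic N : ℚ) : ℝ) := by push_cast at h1 ⊢; linarith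
      _ = _ := h2
  have hlogN : (1:ℝ) ≤ Real.log N := by
    rw [show (1:ℝ) = Real.log (Real.exp 1) by rw [Real.log_exp]]
    apply Real.log_le_log (Real.exp_pos 1)
    have h3 : (3:ℝ) ≤ N := by exact_mod_cast hN
    nlinarith [Real.exp_one_lt_d9]
  have hprodpos : Real.log N ≤ ∏ p ∈ (N+1).primesBelow, (1 - (p:ℝ)⁻¹)⁻¹ := by
    calc Real.log N ≤ ∑ n ∈ Finset.Icc 1 N, (n:ℝ)⁻¹ := hharm
      _ = _ := heq1.symm
      _ ≤ _ := hle1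
  have hloglog : Real.log (Real.log N)
      ≤ ∑ p ∈ (N+1).primesBelow, Real.log (1 - (p:ℝ)⁻¹)⁻¹ := by
    calc Real.log (Real.log N) ≤ Real.log (∏ p ∈ (N+1).primesBelow, (1 - (p:ℝ)⁻¹)⁻¹) :=
          Real.log_le_log (by linarith) hprodpos
      _ = ∑ p ∈ (N+1).primesBelow, Real.log (1 - (p:ℝ)⁻¹)⁻¹ := by
          apply Real.log_prod
          intro p hp
          have hpp := Nat.prime_of_mem_primesBelow hp
          have h2 : (2:ℝ) ≤ p := by exact_mod_cast hpp.two_le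
          have hlt : (p:ℝ)⁻¹ < 1 := by
            rw [inv_lt_one_iff₀]; right; linarith
          have : 0 < 1 - (p:ℝ)⁻¹ := by linarith
          positivity
  have hterm : ∀ p ∈ (N+1).primesBelow,
      Real.log (1 - (p:ℝ)⁻¹)⁻¹ ≤ 1/(p:ℝ) + (1/(p:ℝ))^2 := by
    intro p hp
    have hpp := Nat.prime_of_mem_primesBelow hp
    have h2 : (2:ℝ) ≤ p := by exact_mod_cast hpp.two_le
    have hy1 : (0:ℝ) ≤ (p:ℝ)⁻¹ := by positivity
    have hy2 : (p:ℝ)⁻¹ ≤ 1/2 := by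
      rw [inv_le_comm₀ (by linarith) (by norm_num)]
      norm_num
      exact_mod_cast hpp.two_le
    have := neg_log_one_sub_le hy1 hy2
    simpa [one_div] using this
  have hQ := sum_prime_sq_inv_le (N+1)
  calc Real.log (Real.log N) - 1
      ≤ ∑ p ∈ (N+1).primesBelow, Real.log (1 - (p:ℝ)⁻¹)⁻¹ - 1 := by linarith
    _ ≤ ∑ p ∈ (N+1).primesBelow, (1/(p:ℝ) + (1/(p:ℝ))^2) - 1 :=
        sub_le_sub_right (Finset.sum_le_sum hterm) 1
    _ = ∑ p ∈ (N+1).primesBelow, 1/(p:ℝ) + ∑ p ∈ (N+1).primesBelow, (1/(p:ℝ))^2 - 1 := by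
        rw [Finset.sum_add_distrib]
    _ ≤ ∑ p ∈ (N+1).primesBelow, 1/(p:ℝ) := by linarith

lemma esum_one {P : Finset ℕ} {g : ℕ → ℝ} : esum P g 1 = ∑ p ∈ P, g p := by
  have h0 := recursion (P := P) (g := g) 0
  rw [esum_zero, rsum_zero] at h0
  push_cast at h0
  linarith

lemma exp_helper {t : ℝ} (h0 : 0 ≤ t) (h2 : t ≤ 1/2) : Real.exp (-(2*t)) ≤ 1 - t := by
  have h1 : 1 + 2*t ≤ Real.exp (2*t) := by linarith [Real.add_one_le_exp (2*t)]
  have hpos : (0:ℝ) < 1 + 2*t := by linarith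
  have h3 : Real.exp (-(2*t)) = (Real.exp (2*t))⁻¹ := by
    rw [Real.exp_neg]
  rw [h3]
  calc (Real.exp (2*t))⁻¹ ≤ (1 + 2*t)⁻¹ := by
        apply inv_anti₀ hpos h1
    _ ≤ 1 - t := by
        rw [inv_le_iff_one_le_mul₀ hpos]
        nlinarith
  
lemma log_sub_one {a : ℝ} (ha : 2 ≤ a) : Real.log a - 1 ≤ Real.log (a - 1) := by
  have h1 : (0:ℝ) < a - 1 := by linarith
  have h2 : (0:ℝ) < a := by linarith
  have h3 : Real.log (a / (a-1)) ≤ a/(a-1) - 1 := Real.log_le_sub_one_of_pos (by positivity)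
  rw [Real.log_div h2.ne' h1.ne'] at h3
  have h4 : a/(a-1) - 1 = 1/(a-1) := by field_simp; ring
  have h5 : 1/(a-1) ≤ 1 := by
    rw [div_le_one h1]; linarith
  linarith

end Stmt0Aux

open Stmt0Aux

/-- For all sufficiently large x, uniformly for 1 ≤ h ≤ 2 log log x,
∑ μ²(b)/b over b with P⁺(b) ≤ x and ω(b) = h is ≍ (log log x)^h / h!. -/
theorem stmt0 :
    ∃ c₁ c₂ : ℝ, 0 < c₁ ∧ 0 < c₂ ∧ ∃ x₀ : ℝ, ∀ x : ℝ, x₀ ≤ x → ∀ h : ℕ, 1 ≤ h →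
      (h : ℝ) ≤ 2 * Real.log (Real.log x) →
      c₁ * (Real.log (Real.log x)) ^ h / (Nat.factorial h : ℝ) ≤
        (∑' b : {b : ℕ // Squarefree b ∧ (∀ p : ℕ, p.Prime → p ∣ b → (p : ℝ) ≤ x) ∧
            b.primeFactors.card = h}, (1 : ℝ) / (b.1 : ℝ)) ∧
      (∑' b : {b : ℕ // Squarefree b ∧ (∀ p : ℕ, p.Prime → p ∣ b → (p : ℝ) ≤ x) ∧
            b.primeFactors.card = h}, (1 : ℝ) / (b.1 : ℝ)) ≤
        c₂ * (Real.log (Real.log x)) ^ h / (Nat.factorial h : ℝ) := by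
  refine ⟨Real.exp (-20), Real.exp 12, Real.exp_pos _, Real.exp_pos _,
    Real.exp (Real.exp 300), ?_⟩
  intro x hx h hh1 hh2
  have hx3 : (3:ℝ) ≤ x := by
    have e1 : (301:ℝ) ≤ Real.exp 300 := by linarith [Real.add_one_le_exp (300:ℝ)]
    have e2 : Real.exp 300 + 1 ≤ Real.exp (Real.exp 300) := Real.add_one_le_exp _
    linarith
  have hxpos : (0:ℝ) < x := by linarith
  have hlogx : Real.exp 300 ≤ Real.log x := by
    rw [show (Real.exp 300) = Real.log (Real.exp (Real.exp 300)) by rw [Real.log_exp]]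
    exact Real.log_le_log (Real.exp_pos _) hx
  have hlogx2 : (2:ℝ) ≤ Real.log x := by
    have : (301:ℝ) ≤ Real.exp 300 := by linarith [Real.add_one_le_exp (300:ℝ)]
    linarith
  set L := Real.log (Real.log x) with hLdef
  have hL300 : (300:ℝ) ≤ L := by
    rw [hLdef, show (300:ℝ) = Real.log (Real.exp 300) by rw [Real.log_exp]]
    exact Real.log_le_log (Real.exp_pos _) hlogx
  have hLpos : (0:ℝ) < L := by linarith
  have hT := tsum_eq_esum x (le_of_lt hxpos) h
  set N := ⌊x⌋₊ with hNdef
  have hN3 : 3 ≤ N := Nat.le_floor (by exact_mod_cast hx3)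
  have hNx : (N:ℝ) ≤ x := Nat.floor_le (le_of_lt hxpos)
  have hxN1 : x < (N:ℝ) + 1 := Nat.lt_floor_add_one x
  set P := (N+1).primesBelow with hPdef
  set g : ℕ → ℝ := fun p => 1/(p:ℝ) with hgdef
  have hg : ∀ p ∈ P, 0 ≤ g p := fun p hp => by positivity
  set S := ∑ p ∈ P, g p with hSdef
  set Q := ∑ p ∈ P, g p ^ 2 with hQdef
  -- bounds on log N and log log N
  have hNpos : (0:ℝ) < (N:ℝ) := by
    have : (3:ℝ) ≤ (N:ℝ) := by exact_mod_cast hN3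
    linarith
  have hlogN1 : (1:ℝ) ≤ Real.log N := by
    rw [show (1:ℝ) = Real.log (Real.exp 1) by rw [Real.log_exp]]
    apply Real.log_le_log (Real.exp_pos 1)
    have h3 : (3:ℝ) ≤ (N:ℝ) := by exact_mod_cast hN3
    nlinarith [Real.exp_one_lt_d9]
  have hlogNle : Real.log N ≤ Real.log x := Real.log_le_log hNpos hNx
  have hLLN_le : Real.log (Real.log N) ≤ L := by
    rw [hLdef]
    exact Real.log_le_log (by linarith) hlogNle
  have hlogNge : Real.log x - 1 ≤ Real.log N := by
    have h1 : Real.log (x - 1) ≤ Real.log N :=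
      Real.log_le_log (by linarith) (by linarith)
    have h2 := log_sub_one (a := x) (by linarith)
    linarith
  have hLLN_ge : L - 2 ≤ Real.log (Real.log N) := by
    have h1 : Real.log (Real.log x - 1) ≤ Real.log (Real.log N) :=
      Real.log_le_log (by linarith) (by linarith)
    have h2 := log_sub_one (a := Real.log x) hlogx2
    rw [hLdef]
    linarith
  have hSle : S ≤ L + 6 := by
    have := mertens_second_upper hN3
    rw [hSdef, hPdef]
    calc ∑ p ∈ (N+1).primesBelow, g p = ∑ p ∈ (N+1).primesBelow, 1/(p:ℝ) := rfl
      _ ≤ Real.log (Real.log N) + 6 := this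
      _ ≤ L + 6 := by linarith
  have hSge : L - 3 ≤ S := by
    have := mertens_second_lower hN3
    rw [hSdef, hPdef]
    calc L - 3 ≤ Real.log (Real.log N) - 1 := by linarith
      _ ≤ ∑ p ∈ (N+1).primesBelow, 1/(p:ℝ) := this
      _ = ∑ p ∈ (N+1).primesBelow, g p := rfl
  have hQle : Q ≤ 35/72 := by
    have := sum_prime_sq_inv_le (N+1)
    rw [hQdef, hPdef]
    calc ∑ p ∈ (N+1).primesBelow, g p ^ 2
        = ∑ p ∈ (N+1).primesBelow, (1/(p:ℝ))^2 := rfl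
      _ ≤ 35/72 := this
  have hSpos : (0:ℝ) < S := by linarith
  have hfacpos : (0:ℝ) < (Nat.factorial h : ℝ) := by
    exact_mod_cast Nat.factorial_pos h
  have hE0 : 0 ≤ esum P g h := esum_nonneg hg h
  rw [hT]
  constructor
  · -- lower bound
    rw [div_le_iff₀ hfacpos]
    rcases eq_or_lt_of_le hh1 with h1 | h2
    · -- h = 1
      subst h1
      rw [esum_one, ← hSdef]
      have h21 : (21:ℝ) ≤ Real.exp 20 := by linarith [Real.add_one_le_exp (20:ℝ)]
      have he : Real.exp (-20) ≤ 1/21 := by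
        rw [show (-20:ℝ) = -(20:ℝ) by norm_num, Real.exp_neg]
        calc (Real.exp 20)⁻¹ ≤ (21:ℝ)⁻¹ := inv_anti₀ (by norm_num) h21
          _ = 1/21 := by norm_num
      have hm : Real.exp (-20) * L ≤ (1/21) * L :=
        mul_le_mul_of_nonneg_right he (le_of_lt hLpos)
      have : (1/21) * L ≤ L - 3 := by nlinarith
      simp only [pow_one, Nat.factorial_one, Nat.cast_one, mul_one]
      linarith
    · -- h ≥ 2
      obtain ⟨k, rfl⟩ : ∃ k, h = k + 2 := ⟨h - 2, by omega⟩
      have hge := esum_ge hg k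
      rw [← hSdef, ← hQdef] at hge
      have hh2' : (k:ℝ) + 2 ≤ 2 * L := by push_cast at hh2; linarith
      have hSk : (0:ℝ) ≤ S ^ k := by positivity
      have hQ0 : (0:ℝ) ≤ Q := by
        rw [hQdef]; exact Finset.sum_nonneg fun p _ => sq_nonneg _
      have hcoef : ((k:ℝ)+2) * ((k:ℝ)+1) / 2 ≤ 2 * L^2 := by nlinarith
      have hcoefQ : ((k:ℝ)+2) * ((k:ℝ)+1) / 2 * Q ≤ (35/36) * L^2 := by
        have step : ((k:ℝ)+2) * ((k:ℝ)+1) / 2 * Q ≤ (2 * L^2) * (35/72) := by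
          apply mul_le_mul hcoef hQle hQ0 (by positivity)
        linarith
      have hmid : ((k:ℝ)+2) * ((k:ℝ)+1) / 2 * Q * S^k ≤ (35/36) * L^2 * S^k :=
        mul_le_mul_of_nonneg_right hcoefQ hSk
      have hS2 : (49/50) * L^2 ≤ S^2 := by nlinarith
      have hmain : (7/900) * L^2 * S^k ≤ ((k+2).factorial : ℝ) * esum P g (k+2) := by
        have hpow : S^(k+2) = S^k * S^2 := by ring
        nlinarith [hge, hmid, hS2, hSk]
      -- S^k ≥ exp(-12) L^k
      have hexp12 : Real.exp (-12) * L^k ≤ S^k := by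
        have ht : (0:ℝ) ≤ 3/L := by positivity
        have ht2 : 3/L ≤ 1/2 := by
          rw [div_le_iff₀ hLpos]; linarith
        have hee := exp_helper ht ht2
        have h1 : L * Real.exp (-(2*(3/L))) ≤ L - 3 := by
          have := mul_le_mul_of_nonneg_left hee (le_of_lt hLpos)
          calc L * Real.exp (-(2*(3/L))) ≤ L * (1 - 3/L) := this
            _ = L - 3 := by field_simp
        have h2 : L * Real.exp (-(2*(3/L))) ≤ S := by linarith
        have h3 : (L * Real.exp (-(2*(3/L))))^k ≤ S^k := by
          apply pow_le_pow_left₀ (by positivity) h2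
        have h4 : (L * Real.exp (-(2*(3/L))))^k = L^k * Real.exp (k * (-(2*(3/L)))) := by
          rw [mul_pow, ← Real.exp_nat_mul]
        have h5 : Real.exp (-12) ≤ Real.exp ((k:ℝ) * (-(2*(3/L)))) := by
          apply Real.exp_le_exp.mpr
          have he1 : (k:ℝ) * (-(2*(3/L))) = -(6*(k:ℝ)/L) := by ring
          rw [he1, neg_le_neg_iff]
          rw [div_le_iff₀ hLpos]
          nlinarith
        have h6 : Real.exp (-12) * L^k ≤ L^k * Real.exp ((k:ℝ) * (-(2*(3/L)))) := by
          have := mul_le_mul_of_nonneg_left h5 (le_of_lt (pow_pos hLpos k))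
          linarith [this]
        calc Real.exp (-12) * L^k ≤ L^k * Real.exp ((k:ℝ) * (-(2*(3/L)))) := h6
          _ = (L * Real.exp (-(2*(3/L))))^k := h4.symm
          _ ≤ S^k := h3
      -- numeric: exp(-20) ≤ (7/900) exp(-12)
      have hnum : Real.exp (-20) ≤ (7/900) * Real.exp (-12) := by
        rw [show (-20:ℝ) = -12 + -8 by norm_num, Real.exp_add]
        have h256 : (256:ℝ) ≤ Real.exp 8 := by
          have h2e : (2:ℝ) ≤ Real.exp 1 := by linarith [Real.add_one_le_exp (1:ℝ)]
          have : ((2:ℝ))^(8:ℕ) ≤ (Real.exp 1)^(8:ℕ) := pow_le_pow_left₀ (by norm_num) h2e 8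
          have he8 : (Real.exp 1)^(8:ℕ) = Real.exp 8 := by
            rw [← Real.exp_nat_mul]; norm_num
          rw [he8] at this
          norm_num at this
          linarith
        have he8' : Real.exp (-8) ≤ 1/256 := by
          rw [show (-8:ℝ) = -(8:ℝ) by norm_num, Real.exp_neg]
          calc (Real.exp 8)⁻¹ ≤ (256:ℝ)⁻¹ := inv_anti₀ (by norm_num) h256
            _ = 1/256 := by norm_num
        have hepos : (0:ℝ) < Real.exp (-12) := Real.exp_pos _
        calc Real.exp (-12) * Real.exp (-8) ≤ Real.exp (-12) * (1/256) :=
              mul_le_mul_of_nonneg_left he8' (le_of_lt hepos)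
          _ ≤ (7/900) * Real.exp (-12) := by nlinarith
      calc Real.exp (-20) * L ^ (k+2)
          = (Real.exp (-20) * L^2) * L^k := by ring
        _ ≤ ((7/900) * Real.exp (-12) * L^2) * L^k := by
            apply mul_le_mul_of_nonneg_right _ (le_of_lt (pow_pos hLpos k))
            apply mul_le_mul_of_nonneg_right hnum (by positivity)
        _ = (7/900) * L^2 * (Real.exp (-12) * L^k) := by ring
        _ ≤ (7/900) * L^2 * S^k := by
            apply mul_le_mul_of_nonneg_left hexp12 (by positivity)
        _ = (7/900) * L^2 * S^k := rfl
        _ ≤ ((k+2).factorial : ℝ) * esum P g (k+2) := hmain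
        _ = esum P g (k+2) * ((k+2).factorial : ℝ) := by ring
  · -- upper bound
    rw [le_div_iff₀ hfacpos]
    have h1 := esum_le hg h
    have hexp : S ^ h ≤ Real.exp 12 * L ^ h := by
      have ha : L + 6 ≤ L * Real.exp (6/L) := by
        have := Real.add_one_le_exp (6/L)
        have h2 : L * (6/L + 1) ≤ L * Real.exp (6/L) :=
          mul_le_mul_of_nonneg_left this (le_of_lt hLpos)
        have h3 : L * (6/L + 1) = L + 6 := by field_simp; ring
        linarith
      calc S ^ h ≤ (L + 6) ^ h := pow_le_pow_left₀ (le_of_lt hSpos) hSle h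
        _ ≤ (L * Real.exp (6/L)) ^ h := pow_le_pow_left₀ (by linarith) ha h
        _ = L ^ h * Real.exp (6/L) ^ h := mul_pow _ _ h
        _ = L ^ h * Real.exp (h * (6/L)) := by rw [← Real.exp_nat_mul]
        _ ≤ L ^ h * Real.exp 12 := by
            apply mul_le_mul_of_nonneg_left _ (by positivity)
            apply Real.exp_le_exp.mpr
            have he1 : (h:ℝ) * (6/L) = 6*(h:ℝ)/L := by ring
            rw [he1, div_le_iff₀ hLpos]
            nlinarith
        _ = Real.exp 12 * L ^ h := by ring
    calc esum P g h * (Nat.factorial h : ℝ) = (Nat.factorial h : ℝ) * esum P g h := by ring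
      _ ≤ S ^ h := h1
      _ ≤ Real.exp 12 * L ^ h := hexp
end

section
/- Fix an integer k ≥ 1 and define f(t) = k·log(2^{2k−t} − 2^{k+1−t} + 1) − (2k−t)·log(2^k − 1) for real t ∈ [0,k]. Then f(0) = 0, f(k) = 0, f is strictly convex on (0,k), and consequently f(t) < 0 for all t with 0 < t < k. -/
/-- f(t) = k log(2^{2k−t} − 2^{k+1−t} + 1) − (2k−t) log(2^k−1) vanishes at
t = 0 and t = k, is strictly convex on [0,k], hence is negative on (0,k). -/
theorem stmt7 (k : ℕ) (hk : 2 ≤ k) (f : ℝ → ℝ)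
    (hf : ∀ t : ℝ, f t =
      (k : ℝ) * Real.log ((2 : ℝ) ^ (2 * (k : ℝ) - t) - (2 : ℝ) ^ ((k : ℝ) + 1 - t) + 1) -
        (2 * (k : ℝ) - t) * Real.log ((2 : ℝ) ^ (k : ℝ) - 1)) :
    f 0 = 0 ∧ f (k : ℝ) = 0 ∧ StrictConvexOn ℝ (Set.Icc (0 : ℝ) (k : ℝ)) f ∧
      ∀ t ∈ Set.Ioo (0 : ℝ) (k : ℝ), f t < 0 := by
  have hk1 : (2:ℝ) ≤ (k:ℝ) := by exact_mod_cast hk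
  have hkpos : (0:ℝ) < (k:ℝ) := by linarith
  set c : ℝ := Real.log 2 with hc
  have hcpos : 0 < c := Real.log_pos (by norm_num)
  have hexpc : Real.exp c = 2 := Real.exp_log (by norm_num)
  set E : ℝ := Real.exp (c * k) with hE
  have hEpos : 0 < E := Real.exp_pos _
  have hE4 : (4:ℝ) ≤ E := by
    have h1 : Real.exp (c * 2) ≤ Real.exp (c * k) := Real.exp_le_exp.2 (by nlinarith)
    have h2 : Real.exp (c * 2) = 4 := by
      rw [show c * 2 = c + c by ring, Real.exp_add, hexpc]; norm_num
    rw [hE]; linarith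
  set A : ℝ := E * E - 2 * E with hA
  have hApos : 0 < A := by nlinarith
  set L : ℝ := Real.log (E - 1) with hL
  -- rewrite f in exponential form
  have hrw : ∀ t : ℝ, (2:ℝ) ^ (2 * (k:ℝ) - t) - (2:ℝ) ^ ((k:ℝ) + 1 - t) + 1
      = A * Real.exp (-(c * t)) + 1 := by
    intro t
    rw [Real.rpow_def_of_pos (by norm_num : (0:ℝ) < 2),
        Real.rpow_def_of_pos (by norm_num : (0:ℝ) < 2)]
    rw [show Real.log 2 * (2 * (k:ℝ) - t) = (c * k + c * k) + -(c * t) by rw [hc]; ring,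
        show Real.log 2 * ((k:ℝ) + 1 - t) = (c * k + c) + -(c * t) by rw [hc]; ring,
        Real.exp_add, Real.exp_add, Real.exp_add, Real.exp_add, hexpc, ← hE, hA]
    ring
  have hL2 : (2:ℝ) ^ ((k:ℝ)) - 1 = E - 1 := by
    rw [Real.rpow_def_of_pos (by norm_num : (0:ℝ) < 2), ← hc, ← hE]
  have hfF : ∀ t : ℝ, f t = (k:ℝ) * Real.log (A * Real.exp (-(c * t)) + 1) + (t - 2 * k) * L := by
    intro t
    rw [hf t, hrw t, hL2, ← hL]; ring
  -- positivity of the inner term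
  have hgpos : ∀ t : ℝ, 0 < A * Real.exp (-(c * t)) + 1 := by
    intro t
    have := mul_pos hApos (Real.exp_pos (-(c * t)))
    linarith
  -- f 0 = 0
  have hf0 : f 0 = 0 := by
    rw [hfF 0]
    have h1 : A * Real.exp (-(c * 0)) + 1 = (E - 1) ^ 2 := by
      simp [hA]; ring
    rw [h1, Real.log_pow, ← hL]
    push_cast
    ring
  -- f k = 0
  have hEe : E * Real.exp (-(c * (k:ℝ))) = 1 := by
    rw [hE, ← Real.exp_add]; simp
  have hfk : f (k:ℝ) = 0 := by
    rw [hfF (k:ℝ)]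
    have h1 : A * Real.exp (-(c * (k:ℝ))) + 1 = E - 1 := by
      rw [hA]; linear_combination (E - 2) * hEe
    rw [h1, ← hL]; ring
  -- derivatives
  have hE' : ∀ t : ℝ, HasDerivAt (fun s : ℝ => Real.exp (-(c * s)))
      (Real.exp (-(c * t)) * -c) t := by
    intro t
    have h1 : HasDerivAt (fun s : ℝ => -(c * s)) (-c) t := by
      rw [show (fun s : ℝ => -(c * s)) = fun s => (-c) * s by funext s; ring]
      simpa using (hasDerivAt_id t).const_mul (-c)
    simpa using h1.exp
  have hG : ∀ t : ℝ, HasDerivAt (fun s : ℝ => A * Real.exp (-(c * s)) + 1)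
      (A * (Real.exp (-(c * t)) * -c)) t := by
    intro t
    exact ((hE' t).const_mul A).add_const 1
  have hD1 : ∀ t : ℝ, HasDerivAt (fun s : ℝ => (k:ℝ) * Real.log (A * Real.exp (-(c * s)) + 1) + (s - 2 * k) * L)
      ((k:ℝ) * (A * (Real.exp (-(c * t)) * -c) / (A * Real.exp (-(c * t)) + 1)) + 1 * L) t := by
    intro t
    exact (((hG t).log (hgpos t).ne').const_mul (k:ℝ)).add
      (((hasDerivAt_id t).sub_const (2 * (k:ℝ))).mul_const L)
  have hD2 : ∀ t : ℝ, HasDerivAt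
      (fun s : ℝ => (k:ℝ) * (A * (Real.exp (-(c * s)) * -c) / (A * Real.exp (-(c * s)) + 1)) + 1 * L)
      ((k:ℝ) * ((A * (Real.exp (-(c * t)) * -c * -c) * (A * Real.exp (-(c * t)) + 1)
        - A * (Real.exp (-(c * t)) * -c) * (A * (Real.exp (-(c * t)) * -c)))
        / (A * Real.exp (-(c * t)) + 1) ^ 2)) t := by
    intro t
    exact (((((hE' t).mul_const (-c)).const_mul A).div (hG t) (hgpos t).ne').const_mul (k:ℝ)).add_const (1 * L)
  have hFfun : f = fun s : ℝ => (k:ℝ) * Real.log (A * Real.exp (-(c * s)) + 1) + (s - 2 * k) * L :=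
    funext hfF
  have hsc : StrictConvexOn ℝ (Set.Icc (0:ℝ) (k:ℝ)) f := by
    rw [hFfun]
    apply strictConvexOn_of_deriv2_pos (convex_Icc _ _)
    · exact fun x _ => (hD1 x).continuousAt.continuousWithinAt
    · intro x hx
      have hd1 : deriv (fun s : ℝ => (k:ℝ) * Real.log (A * Real.exp (-(c * s)) + 1) + (s - 2 * k) * L)
          = fun t : ℝ => (k:ℝ) * (A * (Real.exp (-(c * t)) * -c) / (A * Real.exp (-(c * t)) + 1)) + 1 * L :=
        funext fun t => (hD1 t).deriv
      show 0 < deriv (deriv (fun s : ℝ => (k:ℝ) * Real.log (A * Real.exp (-(c * s)) + 1) + (s - 2 * k) * L)) x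
      rw [hd1, (hD2 x).deriv]
      apply mul_pos hkpos
      apply div_pos
      · have h9 : A * (Real.exp (-(c * x)) * -c * -c) * (A * Real.exp (-(c * x)) + 1)
            - A * (Real.exp (-(c * x)) * -c) * (A * (Real.exp (-(c * x)) * -c))
            = (c * c) * (A * Real.exp (-(c * x))) := by ring
        rw [h9]
        exact mul_pos (mul_pos hcpos hcpos) (mul_pos hApos (Real.exp_pos _))
      · exact pow_pos (hgpos x) 2
  refine ⟨hf0, hfk, hsc, ?_⟩
  intro t ht
  obtain ⟨ht0, htk⟩ := ht
  have h0m : (0:ℝ) ∈ Set.Icc (0:ℝ) (k:ℝ) := Set.mem_Icc.2 ⟨le_rfl, hkpos.le⟩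
  have hkm : (k:ℝ) ∈ Set.Icc (0:ℝ) (k:ℝ) := Set.mem_Icc.2 ⟨hkpos.le, le_rfl⟩
  have ha : 0 < 1 - t / k := by
    have : t / k < 1 := (div_lt_one hkpos).2 htk
    linarith
  have hb : 0 < t / k := div_pos ht0 hkpos
  have hab : (1 - t / k) + t / k = 1 := by ring
  have hlt := hsc.2 h0m hkm (by linarith : (0:ℝ) ≠ (k:ℝ)) ha hb hab
  have harg : (1 - t / k) • (0:ℝ) + (t / k) • (k:ℝ) = t := by
    simp only [smul_eq_mul]
    field_simp
    ring
  rw [harg, hf0, hfk] at hlt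
  simpa using hlt
end

section
/- Let k ≥ 2, let m ≤ k, and let b₁,…,b_{2^k−1} and b₁',…,b_{2^k−1}' be two families of pairwise coprime squarefree positive integers with equal total products b = ∏ b_j = ∏ b_j'. Define B_i = ∏_{⌊j/2^i⌋ odd} b_j and B_i' = ∏_{⌊j/2^i⌋ odd} b_j'. If B_i = B_i' for all 0 ≤ i ≤ m−1, then for every vector v ∈ {0,1}^m, the product B_v of all b_j whose m least significant binary digits of j form v equals the analogously defined B_v'. -/
open Finset in
/-- Auxiliary: for a pairwise-coprime family of positive numbers, the product over
the odd-bit-n part of any filtered subset is the gcd of the subset product with B_n. -/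
lemma stmt12_aux (k n : ℕ) (b : ℕ → ℕ)
    (hb : ∀ j ∈ Finset.Icc 1 (2 ^ k - 1), Squarefree (b j))
    (hcop : ∀ j ∈ Finset.Icc 1 (2 ^ k - 1), ∀ j' ∈ Finset.Icc 1 (2 ^ k - 1),
      j ≠ j' → Nat.Coprime (b j) (b j'))
    (r : ℕ → Prop) [DecidablePred r] :
    ∏ j ∈ ((Finset.Icc 1 (2 ^ k - 1)).filter r).filter (fun j => j / 2 ^ n % 2 = 1), b j =
      Nat.gcd (∏ j ∈ (Finset.Icc 1 (2 ^ k - 1)).filter r, b j)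
        (∏ j ∈ (Finset.Icc 1 (2 ^ k - 1)).filter (fun j => Odd (j / 2 ^ n)), b j) := by
  classical
  set U := Finset.Icc 1 (2 ^ k - 1) with hU
  set q : ℕ → Prop := fun j => j / 2 ^ n % 2 = 1 with hq
  set C := ∏ j ∈ (U.filter r).filter q, b j with hC
  set A := ∏ j ∈ (U.filter r).filter (fun j => ¬ q j), b j with hA
  set D := ∏ j ∈ (U.filter q).filter (fun j => ¬ r j), b j with hD
  have hP : ∏ j ∈ U.filter r, b j = C * A :=
    (Finset.prod_filter_mul_prod_filter_not (U.filter r) q b).symm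
  have hBn : ∏ j ∈ U.filter (fun j => Odd (j / 2 ^ n)), b j = C * D := by
    have h1 : U.filter (fun j => Odd (j / 2 ^ n)) = U.filter q := by
      apply Finset.filter_congr
      intro j _
      simp [hq, Nat.odd_iff]
    have h2 : (U.filter q).filter r = (U.filter r).filter q := by
      rw [Finset.filter_filter, Finset.filter_filter]
      exact Finset.filter_congr fun j _ => by tauto
    rw [h1, ← Finset.prod_filter_mul_prod_filter_not (U.filter q) r b, h2]
  have hAD : Nat.Coprime A D := by
    apply Nat.Coprime.prod_left
    intro j hj
    apply Nat.Coprime.prod_right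
    intro j' hj'
    simp only [Finset.mem_filter] at hj hj'
    exact hcop j hj.1.1 j' hj'.1.1 (by rintro rfl; exact hj.2 hj'.1.2)
  rw [hP, hBn, Nat.gcd_mul_left, hAD, mul_one]

open Classical in
/-- if two coprime squarefree factorizations b_j, b_j' (1 ≤ j ≤ 2^k−1) of the
same squarefree number have B_i = B_i' for 0 ≤ i ≤ m−1, then B_v = B_v' for every
v ∈ {0,1}^m, where B_v is the product of b_j over j whose m least significant binary
digits form v. -/
theorem stmt12 (k m : ℕ) (hk : 2 ≤ k) (hm : m ≤ k) (b b' : ℕ → ℕ)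
    (hb : ∀ j ∈ Finset.Icc 1 (2 ^ k - 1), Squarefree (b j))
    (hb' : ∀ j ∈ Finset.Icc 1 (2 ^ k - 1), Squarefree (b' j))
    (hcop : ∀ j ∈ Finset.Icc 1 (2 ^ k - 1), ∀ j' ∈ Finset.Icc 1 (2 ^ k - 1),
      j ≠ j' → Nat.Coprime (b j) (b j'))
    (hcop' : ∀ j ∈ Finset.Icc 1 (2 ^ k - 1), ∀ j' ∈ Finset.Icc 1 (2 ^ k - 1),
      j ≠ j' → Nat.Coprime (b' j) (b' j'))
    (hprod : ∏ j ∈ Finset.Icc 1 (2 ^ k - 1), b j = ∏ j ∈ Finset.Icc 1 (2 ^ k - 1), b' j)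
    (hB : ∀ i < m,
      ∏ j ∈ (Finset.Icc 1 (2 ^ k - 1)).filter (fun j => Odd (j / 2 ^ i)), b j =
        ∏ j ∈ (Finset.Icc 1 (2 ^ k - 1)).filter (fun j => Odd (j / 2 ^ i)), b' j) :
    ∀ v : Fin m → Fin 2,
      ∏ j ∈ (Finset.Icc 1 (2 ^ k - 1)).filter
          (fun j => ∀ i : Fin m, j / 2 ^ (i : ℕ) % 2 = (v i : ℕ)), b j =
        ∏ j ∈ (Finset.Icc 1 (2 ^ k - 1)).filter
          (fun j => ∀ i : Fin m, j / 2 ^ (i : ℕ) % 2 = (v i : ℕ)), b' j := by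
  classical
  set U := Finset.Icc 1 (2 ^ k - 1) with hU
  suffices H : ∀ n, n ≤ m → ∀ v : Fin n → Fin 2,
      ∏ j ∈ U.filter (fun j => ∀ i : Fin n, j / 2 ^ (i : ℕ) % 2 = (v i : ℕ)), b j =
      ∏ j ∈ U.filter (fun j => ∀ i : Fin n, j / 2 ^ (i : ℕ) % 2 = (v i : ℕ)), b' j by
    intro v
    exact H m le_rfl v
  intro n
  induction n with
  | zero =>
    intro _ v
    have : U.filter (fun j => ∀ i : Fin 0, j / 2 ^ (i : ℕ) % 2 = (v i : ℕ)) = U :=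
      Finset.filter_true_of_mem fun j _ => fun i => i.elim0
    rw [this]; exact hprod
  | succ n ih =>
    intro hn v
    have hn' : n ≤ m := Nat.le_of_succ_le hn
    set w : Fin n → Fin 2 := fun i => v i.castSucc with hw
    have hsplit : ∀ j, (∀ i : Fin (n + 1), j / 2 ^ (i : ℕ) % 2 = (v i : ℕ)) ↔
        ((∀ i : Fin n, j / 2 ^ (i : ℕ) % 2 = (w i : ℕ)) ∧
          j / 2 ^ n % 2 = (v (Fin.last n) : ℕ)) := by
      intro j
      constructor
      · intro h
        exact ⟨fun i => by simpa using h i.castSucc, by simpa using h (Fin.last n)⟩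
      · rintro ⟨h1, h2⟩ i
        refine Fin.lastCases ?_ ?_ i
        · simpa using h2
        · intro i; simpa using h1 i
    have hfil : ∀ (f : ℕ → ℕ),
        ∏ j ∈ U.filter (fun j => ∀ i : Fin (n + 1), j / 2 ^ (i : ℕ) % 2 = (v i : ℕ)), f j =
        ∏ j ∈ (U.filter (fun j => ∀ i : Fin n, j / 2 ^ (i : ℕ) % 2 = (w i : ℕ))).filter
            (fun j => j / 2 ^ n % 2 = (v (Fin.last n) : ℕ)), f j := by
      intro f
      congr 1
      rw [Finset.filter_filter]
      exact Finset.filter_congr fun j _ => by rw [hsplit j]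
    rw [hfil b, hfil b']
    set r : ℕ → Prop := fun j => ∀ i : Fin n, j / 2 ^ (i : ℕ) % 2 = (w i : ℕ) with hr
    have hP : ∏ j ∈ U.filter r, b j = ∏ j ∈ U.filter r, b' j := ih hn' w
    have hCeq :
        ∏ j ∈ (U.filter r).filter (fun j => j / 2 ^ n % 2 = 1), b j =
        ∏ j ∈ (U.filter r).filter (fun j => j / 2 ^ n % 2 = 1), b' j := by
      rw [stmt12_aux k n b hb hcop r, stmt12_aux k n b' hb' hcop' r, hP, hB n hn]
    have hv2 : (v (Fin.last n) : ℕ) = 0 ∨ (v (Fin.last n) : ℕ) = 1 := by omega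
    rcases hv2 with hv | hv
    · rw [hv]
      -- even case: cancel the odd part
      have hsplitb := Finset.prod_filter_mul_prod_filter_not (U.filter r)
        (fun j => j / 2 ^ n % 2 = 1) b
      have hsplitb' := Finset.prod_filter_mul_prod_filter_not (U.filter r)
        (fun j => j / 2 ^ n % 2 = 1) b'
      have hCpos : 0 < ∏ j ∈ (U.filter r).filter (fun j => j / 2 ^ n % 2 = 1), b j := by
        apply Finset.prod_pos
        intro j hj
        simp only [Finset.mem_filter] at hj
        exact Nat.pos_of_ne_zero (hb j hj.1.1).ne_zero
      have hnot : ∀ f : ℕ → ℕ,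
          ∏ j ∈ (U.filter r).filter (fun j => ¬ j / 2 ^ n % 2 = 1), f j =
          ∏ j ∈ (U.filter r).filter (fun j => j / 2 ^ n % 2 = 0), f j := by
        intro f
        congr 1
        exact Finset.filter_congr fun j _ => by constructor <;> intro h <;> omega
      rw [hnot b] at hsplitb
      rw [hnot b'] at hsplitb'
      have : (∏ j ∈ (U.filter r).filter (fun j => j / 2 ^ n % 2 = 1), b j) *
          (∏ j ∈ (U.filter r).filter (fun j => j / 2 ^ n % 2 = 0), b j) =
          (∏ j ∈ (U.filter r).filter (fun j => j / 2 ^ n % 2 = 1), b j) *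
          (∏ j ∈ (U.filter r).filter (fun j => j / 2 ^ n % 2 = 0), b' j) := by
        rw [hsplitb, hP, ← hsplitb', hCeq]
      exact Nat.eq_of_mul_eq_mul_left hCpos this
    · rw [hv]
      exact hCeq
end

section
/- Let k ≥ 2 and let n be a squarefree positive integer. Suppose n = ∏_{i=0}^{k−1} a_i · ∏_{j=1}^{2^k−1} b_j where, with B_i = ∏_{j: ⌊j/2^i⌋ odd} b_j, each number a_i·B_i + 1 is prime. Then the k primes a_i·B_i + 1 are pairwise distinct and n = λ(∏_{i=0}^{k−1} (a_i·B_i + 1)), where λ is the Carmichael function. -/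
/-- The Carmichael function: the exponent of the unit group (ℤ/nℤ)*. -/
noncomputable def carmichael (n : ℕ) : ℕ := Monoid.exponent (ZMod n)ˣ

lemma carmichael_prime {p : ℕ} (hp : p.Prime) : carmichael p = p - 1 := by
  have : Fact p.Prime := ⟨hp⟩
  unfold carmichael
  rw [IsCyclic.exponent_eq_card, Nat.card_eq_fintype_card, ZMod.card_units_eq_totient,
    Nat.totient_prime hp]

lemma carmichael_mul {m n : ℕ} (h : Nat.Coprime m n) :
    carmichael (m * n) = Nat.lcm (carmichael m) (carmichael n) := by
  unfold carmichael
  rw [Monoid.exponent_eq_of_mulEquiv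
    ((Units.mapEquiv (ZMod.chineseRemainder h).toMulEquiv).trans MulEquiv.prodUnits)]
  exact Monoid.exponent_prod

lemma carmichael_one : carmichael 1 = 1 := by
  unfold carmichael
  exact Monoid.exp_eq_one_iff.mpr inferInstance

lemma carmichael_prod {ι : Type*} (s : Finset ι) (f : ι → ℕ)
    (hcop : (s : Set ι).Pairwise (Function.onFun Nat.Coprime f)) :
    carmichael (∏ i ∈ s, f i) = s.lcm fun i => carmichael (f i) := by
  induction s using Finset.cons_induction with
  | empty => simpa using carmichael_one
  | cons i s his ih =>
    have hc : Nat.Coprime (f i) (∏ j ∈ s, f j) := by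
      apply Nat.Coprime.prod_right
      intro j hj
      exact hcop (by simp) (by simp [hj]) (by rintro rfl; exact his hj)
    classical
    rw [Finset.prod_cons, carmichael_mul hc, Finset.cons_eq_insert, Finset.lcm_insert,
      ih (hcop.mono (by simp [Finset.coe_cons, Set.subset_insert]))]
    rfl

/-- if squarefree n = ∏ a_i · ∏ b_j with each a_i·B_i + 1 prime (a_i > 1),
then these k primes are pairwise distinct and n = λ(∏ (a_i·B_i + 1)). -/
theorem stmt18 (k : ℕ) (hk : 2 ≤ k) (n : ℕ) (hn : Squarefree n)
    (a : Fin k → ℕ) (b : ℕ → ℕ) (ha : ∀ i, 1 < a i)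
    (hfac : n = (∏ i, a i) * ∏ j ∈ Finset.Icc 1 (2 ^ k - 1), b j)
    (B : Fin k → ℕ)
    (hB : ∀ i : Fin k, B i =
      ∏ j ∈ (Finset.Icc 1 (2 ^ k - 1)).filter (fun j => Odd (j / 2 ^ (i : ℕ))), b j)
    (hprime : ∀ i, (a i * B i + 1).Prime) :
    (∀ i i' : Fin k, i ≠ i' → a i * B i + 1 ≠ a i' * B i' + 1) ∧
    carmichael (∏ i, (a i * B i + 1)) = n := by
  have hcop : ∀ x y : ℕ, x * y ∣ n → Nat.Coprime x y := fun x y h =>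
    Nat.coprime_of_squarefree_mul (hn.squarefree_of_dvd h)
  have hadvd : ∀ i : Fin k, a i ∣ ∏ i, a i := fun i =>
    Finset.dvd_prod_of_mem a (Finset.mem_univ i)
  have hBdvd : ∀ i : Fin k, B i ∣ ∏ j ∈ Finset.Icc 1 (2 ^ k - 1), b j := fun i => by
    rw [hB]
    exact Finset.prod_dvd_prod_of_subset _ _ _ (Finset.filter_subset _ _)
  have hdvd : ∀ i : Fin k, a i * B i ∣ n := fun i =>
    hfac ▸ mul_dvd_mul (hadvd i) (hBdvd i)
  -- distinctness
  have hdist : ∀ i i' : Fin k, i ≠ i' → a i * B i + 1 ≠ a i' * B i' + 1 := by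
    intro i i' hne heq
    have heq' : a i * B i = a i' * B i' := by omega
    have haa : Nat.Coprime (a i) (a i') := by
      apply hcop
      refine dvd_trans ?_ (hfac ▸ dvd_mul_of_dvd_left dvd_rfl _)
      calc a i * a i' = ∏ j ∈ ({i, i'} : Finset (Fin k)), a j := by
            rw [Finset.prod_pair hne]
        _ ∣ ∏ j, a j := Finset.prod_dvd_prod_of_subset _ _ _ (Finset.subset_univ _)
    have h1 : a i ∣ a i' * B i' := heq' ▸ dvd_mul_right _ _
    have h2 : a i ∣ B i' := haa.dvd_of_dvd_mul_left h1
    have h3 : Nat.Coprime (a i) (B i') :=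
      hcop _ _ (hfac ▸ mul_dvd_mul (hadvd i) (hBdvd i'))
    have h4 : a i ∣ 1 := h3 ▸ Nat.dvd_gcd dvd_rfl h2
    have := Nat.dvd_one.mp h4
    have := ha i
    omega
  refine ⟨hdist, ?_⟩
  have hpcop : (↑(Finset.univ : Finset (Fin k)) : Set (Fin k)).Pairwise
      (Function.onFun Nat.Coprime fun i => a i * B i + 1) := by
    intro i _ i' _ hne
    exact (Nat.coprime_primes (hprime i) (hprime i')).mpr (hdist i i' hne)
  rw [carmichael_prod _ _ hpcop]
  have hcar : ∀ i : Fin k, carmichael (a i * B i + 1) = a i * B i := fun i => by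
    rw [carmichael_prime (hprime i)]; omega
  simp only [hcar]
  -- show lcm = n
  apply Nat.dvd_antisymm
  · exact Finset.lcm_dvd fun i _ => hdvd i
  · rw [← Nat.prod_primeFactors_of_squarefree hn]
    apply Finset.prod_primes_dvd
    · intro p hp
      exact (Nat.prime_of_mem_primeFactors hp).prime
    · intro p hp
      have hpp := Nat.prime_of_mem_primeFactors hp
      have hpn : p ∣ n := Nat.dvd_of_mem_primeFactors hp
      rw [hfac] at hpn
      rcases (Nat.Prime.dvd_mul hpp).mp hpn with h | h
      · obtain ⟨i, _, hi⟩ := hpp.prime.exists_mem_finset_dvd h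
        exact dvd_trans (dvd_trans hi (dvd_mul_right _ _))
          (Finset.dvd_lcm (Finset.mem_univ i))
      · obtain ⟨j, hjmem, hj⟩ := hpp.prime.exists_mem_finset_dvd h
        rw [Finset.mem_Icc] at hjmem
        have hj1 : 1 ≤ j := hjmem.1
        have hjk : j < 2 ^ k := by
          have : 1 ≤ 2 ^ k := Nat.one_le_two_pow
          omega
        set i0 := Nat.log 2 j with hi0
        have h1 : 2 ^ i0 ≤ j := Nat.pow_log_le_self 2 (by omega)
        have h2 : j < 2 ^ (i0 + 1) := Nat.lt_pow_succ_log_self (by norm_num) j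
        have hik : i0 < k := by
          have := lt_of_le_of_lt h1 hjk
          exact (Nat.pow_lt_pow_iff_right (by norm_num)).mp this
        have hq : j / 2 ^ i0 = 1 := by
          have hpos : 0 < 2 ^ i0 := Nat.pow_pos (by norm_num)
          have hle : 1 ≤ j / 2 ^ i0 := (Nat.one_le_div_iff hpos).mpr h1
          have hlt : j / 2 ^ i0 < 2 := by
            rw [Nat.div_lt_iff_lt_mul hpos]
            calc j < 2 ^ (i0 + 1) := h2
              _ = 2 * 2 ^ i0 := by ring
          omega
        set I : Fin k := ⟨i0, hik⟩
        have hbB : b j ∣ B I := by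
          rw [hB]
          apply Finset.dvd_prod_of_mem
          rw [Finset.mem_filter, Finset.mem_Icc]
          refine ⟨⟨hjmem.1, hjmem.2⟩, ?_⟩
          show Odd (j / 2 ^ (I : ℕ))
          simp only [I, hq]
          exact odd_one
        exact dvd_trans (dvd_trans hj (dvd_trans hbB (dvd_mul_left _ _)))
          (Finset.dvd_lcm (Finset.mem_univ I))
end
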